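/- Let u = (u1,u2,u3) ∈ ℝ³ with u3 ≠ 0, let M(u) := (1/√2)·(u1·L5 + u2·L4 + u3·L1), let λ3 := (1/4)(u1 + u2/√3) + (1/4)·√((u1−√3·u2)² + 4u3²), and let D := (u1−√3·u2)² + 4u3², A := (u1−√3·u2)/√D. Then the unit vector κ := ( (√2/2)·√(1+A), 0, (√2·u3/√D)·(1+A)^{−1/2} ) ∈ ℝ³ is an eigenvector of M(u) with eigenvalue λ3, i.e. M(u)·κ = λ3·κ. -/

import Mathlib

set_option maxHeartbeats 1000000

open Matrix

noncomputable def L1 : Matrix (Fin 3) (Fin 3) ℝ :=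
  (1 / Real.sqrt 2) • !![0, 0, 1; 0, 0, 0; 1, 0, 0]

noncomputable def L4 : Matrix (Fin 3) (Fin 3) ℝ :=
  (1 / Real.sqrt 6) • !![-1, 0, 0; 0, -1, 0; 0, 0, 2]

noncomputable def L5 : Matrix (Fin 3) (Fin 3) ℝ :=
  (1 / Real.sqrt 2) • !![1, 0, 0; 0, -1, 0; 0, 0, 0]

noncomputable def M (u1 u2 u3 : ℝ) : Matrix (Fin 3) (Fin 3) ℝ :=
  (1 / Real.sqrt 2) • (u1 • L5 + u2 • L4 + u3 • L1)

/-- For `u3 ≠ 0`, the unit director `κ` is an eigenvector of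
`M(u) = (1/√2)(u1 L5 + u2 L4 + u3 L1)` with eigenvalue `λ3`. -/
theorem director_is_eigenvector (u1 u2 u3 : ℝ) (hu3 : u3 ≠ 0) :
    (M u1 u2 u3).mulVec
        ![(Real.sqrt 2 / 2) *
            Real.sqrt (1 + (u1 - Real.sqrt 3 * u2)
              / Real.sqrt ((u1 - Real.sqrt 3 * u2) ^ 2 + 4 * u3 ^ 2)),
          0,
          (Real.sqrt 2 * u3
              / Real.sqrt ((u1 - Real.sqrt 3 * u2) ^ 2 + 4 * u3 ^ 2))
            * (1 + (u1 - Real.sqrt 3 * u2)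
                / Real.sqrt ((u1 - Real.sqrt 3 * u2) ^ 2 + 4 * u3 ^ 2))
              ^ (-(1 : ℝ) / 2)]
      = ((1 / 4) * (u1 + u2 / Real.sqrt 3)
          + (1 / 4) * Real.sqrt ((u1 - Real.sqrt 3 * u2) ^ 2 + 4 * u3 ^ 2)) •
        ![(Real.sqrt 2 / 2) *
            Real.sqrt (1 + (u1 - Real.sqrt 3 * u2)
              / Real.sqrt ((u1 - Real.sqrt 3 * u2) ^ 2 + 4 * u3 ^ 2)),
          0,
          (Real.sqrt 2 * u3
              / Real.sqrt ((u1 - Real.sqrt 3 * u2) ^ 2 + 4 * u3 ^ 2))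
            * (1 + (u1 - Real.sqrt 3 * u2)
                / Real.sqrt ((u1 - Real.sqrt 3 * u2) ^ 2 + 4 * u3 ^ 2))
              ^ (-(1 : ℝ) / 2)] := by
  have h3pos : (0:ℝ) < Real.sqrt 3 := Real.sqrt_pos.mpr (by norm_num)
  have h2pos : (0:ℝ) < Real.sqrt 2 := Real.sqrt_pos.mpr (by norm_num)
  have hr3 : Real.sqrt 3 ^ 2 = 3 := Real.sq_sqrt (by norm_num)
  have hr2 : Real.sqrt 2 ^ 2 = 2 := Real.sq_sqrt (by norm_num)
  have h6 : Real.sqrt 6 = Real.sqrt 2 * Real.sqrt 3 := by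
    rw [← Real.sqrt_mul (by norm_num)]; norm_num
  set r2 := Real.sqrt 2
  set r3 := Real.sqrt 3
  set b := u1 - r3 * u2 with hb
  have hDpos : (0:ℝ) < b ^ 2 + 4 * u3 ^ 2 := by positivity
  set D := Real.sqrt (b ^ 2 + 4 * u3 ^ 2) with hDdef
  have hD0 : 0 < D := Real.sqrt_pos.mpr hDpos
  have hD2 : D ^ 2 = b ^ 2 + 4 * u3 ^ 2 := Real.sq_sqrt hDpos.le
  have hbD : |b| < D := by
    nlinarith [abs_nonneg b, sq_abs b, mul_self_pos.mpr hu3, hD2]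
  have hDb : 0 < D + b := by
    rcases abs_lt.mp hbD with ⟨h1, _⟩; linarith
  have h1A : 1 + b / D = (D + b) / D := by field_simp
  set s := Real.sqrt (D + b) with hsdef
  have hs0 : 0 < s := Real.sqrt_pos.mpr hDb
  have hs2 : s ^ 2 = D + b := Real.sq_sqrt hDb.le
  set q := Real.sqrt D with hqdef
  have hq0 : 0 < q := Real.sqrt_pos.mpr hD0
  have hq2 : q ^ 2 = D := Real.sq_sqrt hD0.le
  have hs2' : s ^ 2 = q ^ 2 + (u1 - r3 * u2) := by rw [hq2, ← hb]; exact hs2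
  have hD2' : q ^ 4 = (u1 - r3 * u2) ^ 2 + 4 * u3 ^ 2 := by
    rw [show q ^ 4 = (q ^ 2) ^ 2 by ring, hq2, hD2, hb]
  have hsq : Real.sqrt (1 + b / D) = s / q := by
    rw [h1A, Real.sqrt_div hDb.le]
  have h1Apos : (0:ℝ) < 1 + b / D := by rw [h1A]; positivity
  have hrpow : (1 + b / D) ^ (-(1:ℝ) / 2) = q / s := by
    rw [show (-(1:ℝ)/2) = -((1:ℝ)/2) by norm_num, Real.rpow_neg h1Apos.le,
      ← Real.sqrt_eq_rpow, hsq, inv_div]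
  rw [hsq, hrpow]
  funext i
  fin_cases i <;>
    simp only [M, L1, L4, L5, mulVec, dotProduct, Fin.sum_univ_three, h6,
      Matrix.smul_apply, Matrix.add_apply, Matrix.cons_val', Matrix.cons_val_zero,
      Matrix.cons_val_one, Matrix.head_cons, Matrix.empty_val', Matrix.cons_val_fin_one,
      Matrix.head_fin_const, Matrix.cons_val_two, Matrix.tail_cons, Matrix.of_apply,
      Pi.smul_apply, smul_eq_mul, Pi.add_apply, Fin.isValue, Fin.zero_eta, Fin.mk_one,
      Matrix.cons_val_zero, Matrix.cons_val_one, Matrix.head_cons] <;> norm_num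
  · rw [← hq2]
    field_simp
    rw [show √2 = r2 from rfl]
    linear_combination (-(r2*s^2*(u1*r3+u2+r3*q^2))) * hr2 +
      (2*r2*r3*u1 - 6*r2*u2 - 2*r2*r3*q^2) * hs2' + (-2*r2*r3) * hD2' +
      (2*r2*u2*(q^2+u1-r3*u2)) * hr3
  · rw [← hq2]
    field_simp
    rw [show √2 = r2 from rfl]
    linear_combination (-2*r2*(r3*u1+u2+q^2*r3)) * hr2 + (4*r2*r3) * hs2' +
      (-4*r2*u2) * hr3
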